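/- For integers n ≥ 2 define f_n(x) := sin(nx)² / (sin x · √(7 − cos(2x))). Then for every x ∈ (0, π/2), f_n(x) = ((15n−22)/(n−1))·f_{n−1}(x) − ((15n−23)/(n−1))·f_{n−2}(x) + ((n−2)/(n−1))·f_{n−3}(x) + (1/(n−1))·(d/dx)[√(7 − cos(2x))·cos((2n−3)x)], where the last term denotes the derivative at x of the function x ↦ √(7 − cos(2x))·cos((2n−3)x), and f_{−1} := 0, f_0 := 0. -/

import Mathlib

open Real Set

/-- `f_m(x) = sin(mx)² / (sin x · √(7 - cos 2x))` for `m ≥ 0`, extended by `0`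
for negative indices (note `f_0 = 0` holds for the formula as well). -/
noncomputable def triF (m : ℤ) (x : ℝ) : ℝ :=
  if 0 ≤ m then
    Real.sin (m * x) ^ 2 / (Real.sin x * Real.sqrt (7 - Real.cos (2 * x)))
  else 0

/-!
Multiplying by `(n - 1) sin x √(7 - cos 2x)`, the recurrence becomes a polynomial identity in
`sin² (kx)`, `sin x`, `sin 2x` and the oscillating factors `cos ((2n-3)x)`, `sin ((2n-3)x)` of the
derivative term. Writing every `sin² (kx)` as `(1 - cos (2kx)) / 2` and expanding
`cos (2kx) = cos ((2n-3)x ± jx)` with `j ∈ {1, 3}` reduces it to the Pythagorean identity.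
-/

theorem sin_sq_recurrence (m x : ℝ) :
    (m - 1) * sin (m * x) ^ 2
      = (15 * m - 22) * sin ((m - 1) * x) ^ 2 - (15 * m - 23) * sin ((m - 2) * x) ^ 2
        + (m - 2) * sin ((m - 3) * x) ^ 2
        + sin x * (sin (2 * x) * cos ((2 * m - 3) * x)
            - (2 * m - 3) * (7 - cos (2 * x)) * sin ((2 * m - 3) * x)) := by
  rw [sin_sq_eq_half_sub (m * x), sin_sq_eq_half_sub ((m - 1) * x),
    sin_sq_eq_half_sub ((m - 2) * x), sin_sq_eq_half_sub ((m - 3) * x),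
    show 2 * (m * x) = (2 * m - 3) * x + 3 * x by ring,
    show 2 * ((m - 1) * x) = (2 * m - 3) * x + x by ring,
    show 2 * ((m - 2) * x) = (2 * m - 3) * x - x by ring,
    show 2 * ((m - 3) * x) = (2 * m - 3) * x - 3 * x by ring,
    cos_add, cos_add, cos_sub, cos_sub, cos_three_mul, sin_three_mul, cos_two_mul, sin_two_mul]
  linear_combination (-2 * cos x * cos ((2 * m - 3) * x)
    - 2 * (2 * m - 3) * sin x * sin ((2 * m - 3) * x)) * sin_sq_add_cos_sq x

theorem hasDerivAt_sqrt_sub_cos_two_mul_mul_cos {c : ℝ} (hc : 1 < c) (a x : ℝ) :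
    HasDerivAt (fun y => √(c - cos (2 * y)) * cos (a * y))
      (sin (2 * x) / √(c - cos (2 * x)) * cos (a * x)
        - a * √(c - cos (2 * x)) * sin (a * x)) x := by
  have hpos : 0 < c - cos (2 * x) := by linarith [cos_le_one (2 * x)]
  have hinner : HasDerivAt (fun y => c - cos (2 * y)) (2 * sin (2 * x)) x := by
    simpa [mul_comm] using ((hasDerivAt_id x).const_mul 2).cos.const_sub c
  have hcos : HasDerivAt (fun y => cos (a * y)) (-sin (a * x) * a) x := by
    simpa using ((hasDerivAt_id x).const_mul a).cos
  refine ((hinner.sqrt hpos.ne').mul hcos).congr_deriv ?_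
  field_simp
  ring

theorem triF_of_nonneg {m : ℤ} (hm : 0 ≤ m) (x : ℝ) :
    triF m x = sin (m * x) ^ 2 / (sin x * √(7 - cos (2 * x))) :=
  if_pos hm

theorem sub_two_mul_triF_sub_three {n : ℤ} (hn : 2 ≤ n) (x : ℝ) :
    ((n : ℝ) - 2) * triF (n - 3) x
      = ((n : ℝ) - 2) * (sin (((n : ℝ) - 3) * x) ^ 2 / (sin x * √(7 - cos (2 * x)))) := by
  rcases eq_or_lt_of_le hn with rfl | hn
  · norm_num
  · rw [triF_of_nonneg (by omega)]
    push_cast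
    rfl

theorem triF_recurrence (n : ℤ) (hn : 2 ≤ n) (x : ℝ) (hx : x ∈ Set.Ioo 0 (π / 2)) :
    triF n x = ((15 * (n : ℝ) - 22) / ((n : ℝ) - 1)) * triF (n - 1) x
      - ((15 * (n : ℝ) - 23) / ((n : ℝ) - 1)) * triF (n - 2) x
      + (((n : ℝ) - 2) / ((n : ℝ) - 1)) * triF (n - 3) x
      + (1 / ((n : ℝ) - 1)) *
          deriv (fun y : ℝ =>
            Real.sqrt (7 - Real.cos (2 * y)) * Real.cos ((2 * (n : ℝ) - 3) * y)) x := by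
  have hn1 : (n : ℝ) - 1 ≠ 0 := by
    have : (2 : ℝ) ≤ n := by exact_mod_cast hn
    linarith
  have hsin : sin x ≠ 0 := (sin_pos_of_pos_of_lt_pi hx.1 (by linarith [hx.2, pi_pos])).ne'
  have h7 : 0 < 7 - cos (2 * x) := by linarith [cos_le_one (2 * x)]
  rw [div_mul_eq_mul_div _ _ (triF (n - 3) x), sub_two_mul_triF_sub_three hn,
    (hasDerivAt_sqrt_sub_cos_two_mul_mul_cos (by norm_num) _ x).deriv,
    triF_of_nonneg (by omega), triF_of_nonneg (by omega), triF_of_nonneg (by omega)]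
  push_cast
  set s := √(7 - cos (2 * x))
  have hs : s ≠ 0 := (sqrt_pos.2 h7).ne'
  have hs2 : s ^ 2 = 7 - cos (2 * x) := sq_sqrt h7.le
  field_simp
  rw [hs2]
  -- `field_simp` has commuted the products inside `sin` and `cos`, so the atoms need `ring_nf`
  linear_combination (norm := ring_nf) sin_sq_recurrence n x
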